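/- arXiv:2104.07090 — 8 statements merged into one kernel-verified Lean document; each statement's English description precedes it below -/
import Mathlib

section
/- Let (A_0, A_1, ∂_0, ∂_1, s) be a 1-truncated simplicial ring (rings A_0, A_1 with ring homomorphisms ∂_0, ∂_1 : A_1 → A_0 and s : A_0 → A_1 satisfying ∂_0∘s = ∂_1∘s = id) such that (Ker ∂_0)·(Ker ∂_1) = 0. Set C := A_0, I := Ker ∂_0, d := ∂_1|_I, with the C-module structure on I given via s. Then (I,d) is a quasi-ideal in C, i.e., d is C-linear and d(x)·y = d(y)·x for all x,y ∈ I. -/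
/-!
The section `s` splits `x = s (∂₁ x) + (x - s (∂₁ x))` with the second summand
in `Ker ∂₁`, which is killed by `Ker ∂₀`. So on `Ker ∂₀` multiplication by `x` agrees with
multiplication by `s (∂₁ x)`, and the symmetry `d(x)·y = d(y)·x` is the commutativity `x y = y x`.
-/

theorem map_section_mul {A₀ A₁ : Type*} [Semiring A₀] [Semiring A₁] (d : A₁ →+* A₀) (s : A₀ →+* A₁)
    (hs : ∀ a, d (s a) = a) (c : A₀) (x : A₁) : d (s c * x) = c * d x := by
  rw [map_mul, hs]

section

variable {A₀ A₁ : Type*} [Ring A₀] [CommRing A₁] (d₀ d₁ : A₁ →+* A₀) (s : A₀ →+* A₁)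

theorem map_sub_section_apply_eq_zero (hs : ∀ a, d₁ (s a) = a) (x : A₁) : d₁ (x - s (d₁ x)) = 0 := by
  rw [map_sub, hs, sub_self]

theorem mul_eq_section_mul_of_ker_mul_ker (hs : ∀ a, d₁ (s a) = a)
    (hker : ∀ x y : A₁, d₀ x = 0 → d₁ y = 0 → x * y = 0) (x : A₁) {y : A₁} (hy : d₀ y = 0) :
    x * y = s (d₁ x) * y := by
  have h := hker y _ hy (map_sub_section_apply_eq_zero d₁ s hs x)
  rw [mul_sub, sub_eq_zero] at h
  rw [mul_comm, h, mul_comm]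

end

theorem trunc_simplicial_ring_gives_quasiIdeal_general
    (A0 A1 : Type) [CommRing A0] [CommRing A1]
    (d0 d1 : A1 →+* A0) (s : A0 →+* A1)
    (hs1 : ∀ a, d1 (s a) = a)
    (hgood : ∀ x y : A1, d0 x = 0 → d1 y = 0 → x * y = 0) :
    (∀ (c : A0) (x : A1), d1 (s c * x) = c * d1 x) ∧
    (∀ x y : A1, d0 x = 0 → d0 y = 0 → s (d1 x) * y = s (d1 y) * x) := by
  refine ⟨map_section_mul d1 s hs1, fun x y hx hy => ?_⟩
  rw [← mul_eq_section_mul_of_ker_mul_ker d0 d1 s hs1 hgood x hy,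
    ← mul_eq_section_mul_of_ker_mul_ker d0 d1 s hs1 hgood y hx, mul_comm]

/-- Let `(A₀, A₁, ∂₀, ∂₁, s)` be a 1-truncated simplicial
commutative ring (`∂₀, ∂₁ : A₁ →+* A₀`, `s : A₀ →+* A₁`, `∂₀ ∘ s = ∂₁ ∘ s = id`)
such that `(Ker ∂₀) · (Ker ∂₁) = 0`.  Set `C := A₀`, `I := Ker ∂₀`,
`d := ∂₁|_I`, with the `C`-module structure on `I` given by `c • x := s(c) * x`.
Then `(I, d)` is a quasi-ideal in `C`: `d` is `C`-linear, i.e.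
`∂₁ (s c * x) = c * ∂₁ x`, and `d(x)·y = d(y)·x`, i.e.
`s (∂₁ x) * y = s (∂₁ y) * x` for all `x, y ∈ Ker ∂₀`. -/
theorem trunc_simplicial_ring_gives_quasiIdeal
    (A0 A1 : Type) [CommRing A0] [CommRing A1]
    (d0 d1 : A1 →+* A0) (s : A0 →+* A1)
    (hs0 : ∀ a, d0 (s a) = a) (hs1 : ∀ a, d1 (s a) = a)
    (hgood : ∀ x y : A1, d0 x = 0 → d1 y = 0 → x * y = 0) :
    (∀ (c : A0) (x : A1), d1 (s c * x) = c * d1 x) ∧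
    (∀ x y : A1, d0 x = 0 → d0 y = 0 → s (d1 x) * y = s (d1 y) * x) :=
  trunc_simplicial_ring_gives_quasiIdeal_general A0 A1 d0 d1 s hs1 hgood
end

section
/- Let (C, I, d) be a quasi-ideal. Define A_0 := C, A_1 := C ⊕ I with multiplication (c,x)(c',x') := (cc', cx' + c'x + x·dx'), s(c) := (c,0), ∂_0(c,x) := c, ∂_1(c,x) := c + dx. Then A_1 is a commutative ring, s, ∂_0, ∂_1 are ring homomorphisms with ∂_0∘s = ∂_1∘s = id, and (Ker ∂_0)·(Ker ∂_1) = 0. -/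
/-!
Everything is a componentwise computation in `C × I`. The symmetry `d x • y = d y • x` is
exactly what makes the correction term `x · d x'` commutative; associativity needs only the
`C`-linearity of `d`. If `p.1 = 0`, the product `p q` collapses to `(0, ∂₁ q • p.2)`, which
kills `(Ker ∂₀) · (Ker ∂₁)`.
-/

/-- The multiplication on `A₁ := C ⊕ I` attached to a quasi-ideal `(I, d)` in `C`:
`(c, x) * (c', x') := (c c', c • x' + c' • x + x · d x')`, where `x · d x'`
denotes the module action of `d x' ∈ C` on `x ∈ I`. -/
def qmul {C I : Type} [CommRing C] [AddCommGroup I] [Module C I]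
    (d : I →ₗ[C] C) (p q : C × I) : C × I :=
  (p.1 * q.1, p.1 • q.2 + q.1 • p.2 + d q.2 • p.2)

section QuasiIdeal

variable {C I : Type} [CommRing C] [AddCommGroup I] [Module C I] (d : I →ₗ[C] C)

theorem qmul_comm (hd : ∀ x y : I, d x • y = d y • x) (p q : C × I) :
    qmul d p q = qmul d q p := by
  simp only [qmul, Prod.mk.injEq, hd q.2 p.2, mul_comm p.1]
  exact ⟨trivial, by abel⟩

theorem qmul_assoc (p q r : C × I) :
    qmul d (qmul d p q) r = qmul d p (qmul d q r) := by
  simp only [qmul, Prod.mk.injEq, smul_add, map_add, map_smul, smul_smul, add_smul, smul_eq_mul]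
  exact ⟨by ring, by module⟩

theorem qmul_add (p q r : C × I) : qmul d p (q + r) = qmul d p q + qmul d p r := by
  simp only [qmul, Prod.ext_iff, Prod.fst_add, Prod.snd_add, map_add, smul_add, add_smul]
  exact ⟨by ring, by abel⟩

theorem add_qmul (p q r : C × I) : qmul d (p + q) r = qmul d p r + qmul d q r := by
  simp only [qmul, Prod.ext_iff, Prod.fst_add, Prod.snd_add, smul_add, add_smul]
  exact ⟨by ring, by abel⟩

theorem one_qmul (p : C × I) : qmul d (1, 0) p = p := by
  simp [qmul]

theorem mk_zero_qmul_mk_zero (c c' : C) : qmul d (c, 0) (c', 0) = (c * c', 0) := by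
  simp [qmul]

theorem qmul_fst (p q : C × I) : (qmul d p q).1 = p.1 * q.1 := rfl

theorem qmul_fst_add_map_snd (p q : C × I) :
    (qmul d p q).1 + d (qmul d p q).2 = (p.1 + d p.2) * (q.1 + d q.2) := by
  simp only [qmul, map_add, map_smul, smul_eq_mul]
  ring

theorem qmul_of_fst_eq_zero {p : C × I} (hp : p.1 = 0) (q : C × I) :
    qmul d p q = (0, (q.1 + d q.2) • p.2) := by
  simp only [qmul, hp, zero_mul, zero_smul, zero_add, add_smul]

theorem qmul_eq_zero_of_fst_eq_zero_of_fst_add_map_snd_eq_zero {p q : C × I} (hp : p.1 = 0)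
    (hq : q.1 + d q.2 = 0) : qmul d p q = 0 := by
  rw [qmul_of_fst_eq_zero d hp, hq, zero_smul, Prod.mk_zero_zero]

end QuasiIdeal

/-- Let `(C, I, d)` be a quasi-ideal.  Define `A₀ := C`,
`A₁ := C ⊕ I` with the multiplication `qmul` above, `s c := (c, 0)`,
`∂₀ (c, x) := c`, `∂₁ (c, x) := c + d x`.  Then `A₁` is a commutative ring
(the multiplication is commutative, associative, unital with unit `(1,0)` and
distributes over the componentwise addition), `s`, `∂₀`, `∂₁` are ring
homomorphisms (additivity being obvious, we record multiplicativity and that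
`s` sends `1` to the unit), `∂₀ ∘ s = ∂₁ ∘ s = id`, and
`(Ker ∂₀) · (Ker ∂₁) = 0`. -/
theorem quasiIdeal_gives_trunc_simplicial_ring
    (C : Type) [CommRing C] (I : Type) [AddCommGroup I] [Module C I]
    (d : I →ₗ[C] C) (hq : ∀ x y : I, d x • y = d y • x) :
    -- `A₁` is a commutative ring:
    (∀ p q : C × I, qmul d p q = qmul d q p) ∧
    (∀ p q r : C × I, qmul d (qmul d p q) r = qmul d p (qmul d q r)) ∧
    (∀ p q r : C × I, qmul d p (q + r) = qmul d p q + qmul d p r) ∧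
    (∀ p q r : C × I, qmul d (p + q) r = qmul d p r + qmul d q r) ∧
    (∀ p : C × I, qmul d (1, 0) p = p) ∧
    -- `s` is a ring homomorphism:
    (∀ c c' : C, qmul d (c, 0) (c', 0) = (c * c', 0)) ∧
    -- `∂₀` is multiplicative:
    (∀ p q : C × I, (qmul d p q).1 = p.1 * q.1) ∧
    -- `∂₁` is multiplicative:
    (∀ p q : C × I, (qmul d p q).1 + d (qmul d p q).2
        = (p.1 + d p.2) * (q.1 + d q.2)) ∧
    -- `∂₀ ∘ s = ∂₁ ∘ s = id`:
    (∀ c : C, ((c, (0 : I)) : C × I).1 = c) ∧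
    (∀ c : C, c + d 0 = c) ∧
    -- `(Ker ∂₀) · (Ker ∂₁) = 0`:
    (∀ p q : C × I, p.1 = 0 → q.1 + d q.2 = 0 → qmul d p q = 0) :=
  ⟨qmul_comm d hq, qmul_assoc d, qmul_add d, add_qmul d, one_qmul d, mk_zero_qmul_mk_zero d,
    qmul_fst d, qmul_fst_add_map_snd d, fun _ => rfl, fun c => by rw [map_zero, add_zero],
    fun _ _ => qmul_eq_zero_of_fst_eq_zero_of_fst_add_map_snd_eq_zero d⟩
end

section
/- Let (A_0, A_1, ∂_0, ∂_1, s) be a 1-truncated simplicial commutative ring, and let B := {(f,g) ∈ A_1 × A_1 : ∂_1(f) = ∂_0(g)} with its ring structure as a subring of A_1 × A_1. The map φ : B → A_1 given by φ(f,g) := f + g − s(∂_1(f)) is a ring homomorphism if and only if (Ker ∂_0)·(Ker ∂_1) = 0. -/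
/-!
Every `(f, g) ∈ B` decomposes as `(u + y, u + x)` with `u = s (∂₁ f)`, `x ∈ Ker ∂₀` and
`y ∈ Ker ∂₁`, and then `φ (f, g) = u + x + y`. Since `s ∘ ∂₁` is a ring homomorphism, expanding
products shows that `φ (p q)` and `φ p * φ q` differ exactly by the cross terms `x y' + x' y`,
which lie in `(Ker ∂₀) · (Ker ∂₁)`. Conversely, `(y, 0)` and `(0, x)` lie in `B` for
`x ∈ Ker ∂₀`, `y ∈ Ker ∂₁`, their product is `0`, and `φ` sends them to `y` and `x`.
-/

lemma map_sub_section_eq_zero {R S : Type*} [Ring R] [Ring S] (f : R →+* S) (t : S →+* R)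
    (hf : ∀ a, f (t a) = a) {x : R} {a : S} (h : f x = a) : f (x - t a) = 0 := by
  rw [map_sub, hf, h, sub_self]

lemma add_sub_map_mul_eq_mul_sub {A0 A1 : Type*} [CommRing A0] [CommRing A1]
    (d1 : A1 →+* A0) (s : A0 →+* A1) (a b c d : A1) :
    a * c + b * d - s (d1 (a * c)) =
      (a + b - s (d1 a)) * (c + d - s (d1 c)) -
        ((b - s (d1 a)) * (c - s (d1 c)) + (d - s (d1 c)) * (a - s (d1 a))) := by
  rw [map_mul, map_mul]
  ring

/-- Let `(A₀, A₁, ∂₀, ∂₁, s)` be a 1-truncated simplicial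
commutative ring, and let `B := {(f, g) ∈ A₁ × A₁ : ∂₁ f = ∂₀ g}` with its
ring structure as a subring of `A₁ × A₁`.  The map `φ : B → A₁`,
`φ (f, g) := f + g − s (∂₁ f)`, is a ring homomorphism (additive,
multiplicative and unital on `B`) if and only if
`(Ker ∂₀) · (Ker ∂₁) = 0`. -/
theorem comp_ringHom_iff_good
    (A0 A1 : Type) [CommRing A0] [CommRing A1]
    (d0 d1 : A1 →+* A0) (s : A0 →+* A1)
    (hs0 : ∀ a, d0 (s a) = a) (hs1 : ∀ a, d1 (s a) = a) :
    let φ : A1 × A1 → A1 := fun p => p.1 + p.2 - s (d1 p.1)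
    ((∀ p q : A1 × A1, d1 p.1 = d0 p.2 → d1 q.1 = d0 q.2 →
        φ (p * q) = φ p * φ q) ∧
     (∀ p q : A1 × A1, d1 p.1 = d0 p.2 → d1 q.1 = d0 q.2 →
        φ (p + q) = φ p + φ q) ∧
     φ (1, 1) = 1)
    ↔ (∀ x y : A1, d0 x = 0 → d1 y = 0 → x * y = 0) := by
  intro φ
  constructor
  · rintro ⟨hmul, -, -⟩ x y hx hy
    have h := hmul (y, 0) (0, x) (by simp [hy]) (by simp [hx])
    simpa [φ, hy, mul_comm] using h.symm
  · intro H
    refine ⟨?_, fun p q _ _ => ?_, by simp [φ]⟩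
    · rintro ⟨a, b⟩ ⟨c, d⟩ hp hq
      have hb := map_sub_section_eq_zero d0 s hs0 hp.symm
      have hd := map_sub_section_eq_zero d0 s hs0 hq.symm
      have ha := map_sub_section_eq_zero d1 s hs1 (x := a) rfl
      have hc := map_sub_section_eq_zero d1 s hs1 (x := c) rfl
      simp only [φ, Prod.mk_mul_mk]
      rw [add_sub_map_mul_eq_mul_sub, H _ _ hb hc, H _ _ hd ha, add_zero, sub_zero]
    · simp only [φ, Prod.fst_add, Prod.snd_add, map_add]
      ring
end

section
/- Every morphism in the category of admissible correspondences Corr_adm(R_1, R_2) between objects R_1, R_2 of DGRings^{0,-1} is an isomorphism; i.e., Corr_adm(R_1, R_2) is a groupoid. -/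
/-- A morphism of objects of `DGRings^{0,-1}` (equivalently, of quasi-ideals):
a ring homomorphism in degree `0` and an additive map in degree `-1`,
compatible with the module structures and the differentials. -/
def IsDGHom {C I : Type} [CommRing C] [AddCommGroup I] [Module C I]
    (d : I →ₗ[C] C)
    {C' I' : Type} [CommRing C'] [AddCommGroup I'] [Module C' I']
    (d' : I' →ₗ[C'] C') (fC : C →+* C') (fI : I →+ I') : Prop :=
  (∀ (c : C) (x : I), fI (c • x) = fC c • fI x) ∧
  (∀ x : I, d' (fI x) = fC (d x))

/-- `f` is a quasi-isomorphism in `DGRings^{0,-1}`: it induces isomorphisms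
`Ker d ≅ Ker d'` and `Coker d ≅ Coker d'`. -/
def IsQuasiIso {C I : Type} [CommRing C] [AddCommGroup I] [Module C I]
    (d : I →ₗ[C] C)
    {C' I' : Type} [CommRing C'] [AddCommGroup I'] [Module C' I']
    (d' : I' →ₗ[C'] C') (fC : C →+* C') (fI : I →+ I') : Prop :=
  (∀ x : I, d x = 0 → fI x = 0 → x = 0) ∧
  (∀ x' : I', d' x' = 0 → ∃ x : I, d x = 0 ∧ fI x = x') ∧
  (∀ c : C, (∃ x' : I', fC c = d' x') → ∃ x : I, d x = c) ∧
  (∀ c' : C', ∃ (c : C) (x' : I'), c' = fC c + d' x')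

/-!
Two-out-of-three shows that `h` is a quasi-isomorphism, since `f' ∘ h = f` with `f`, `f'`
quasi-isomorphisms. In degree `-1`, `h` is bijective because it intertwines the two bijections
`R₁₂^{-1} ≅ R₁^{-1} × R₂^{-1} ≅ R₁₂'^{-1}`. A quasi-isomorphism that is bijective in degree `-1`
is bijective in degree `0` as well (five lemma for `0 → H^{-1} → R^{-1} → R^0 → H^0 → 0`).
-/

section

variable {C I : Type} [CommRing C] [AddCommGroup I] [Module C I] {d : I →ₗ[C] C}
  {C' I' : Type} [CommRing C'] [AddCommGroup I'] [Module C' I'] {d' : I' →ₗ[C'] C'}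
  {C₁ I₁ : Type} [CommRing C₁] [AddCommGroup I₁] [Module C₁ I₁] {d₁ : I₁ →ₗ[C₁] C₁}
  {hC : C →+* C'} {hI : I →+ I'}

theorem IsQuasiIso.of_comp_right {fC : C →+* C₁} {fI : I →+ I₁} {fC' : C' →+* C₁}
    {fI' : I' →+ I₁} (hh : IsDGHom d d' hC hI) (hf' : IsDGHom d' d₁ fC' fI')
    (hq : IsQuasiIso d d₁ fC fI) (hq' : IsQuasiIso d' d₁ fC' fI') (hcommC : ∀ c, fC' (hC c) = fC c)
    (hcommI : ∀ x, fI' (hI x) = fI x) :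
    IsQuasiIso d d' hC hI := by
  obtain ⟨hker_inj, hker_surj, hcoker_inj, hcoker_surj⟩ := hq
  obtain ⟨hker_inj', -, hcoker_inj', -⟩ := hq'
  refine ⟨fun x hx hhx => hker_inj x hx (by rw [← hcommI, hhx, map_zero]), ?_, ?_, ?_⟩
  · intro x' hx'
    obtain ⟨x, hx, hfx⟩ := hker_surj (fI' x') (by rw [hf'.2, hx', map_zero])
    refine ⟨x, hx, eq_of_sub_eq_zero (hker_inj' _ ?_ ?_)⟩
    · rw [map_sub, hh.2, hx, map_zero, hx', sub_zero]
    · rw [map_sub, hcommI, hfx, sub_self]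
  · rintro c ⟨x', hx'⟩
    exact hcoker_inj c ⟨fI' x', by rw [← hcommC, hx', hf'.2]⟩
  · intro c'
    obtain ⟨c, x₁, hc⟩ := hcoker_surj (fC' c')
    obtain ⟨x', hx'⟩ :=
      hcoker_inj' (c' - hC c) ⟨x₁, by rw [map_sub, hcommC, hc, add_sub_cancel_left]⟩
    exact ⟨c, x', by rw [hx', add_sub_cancel]⟩

theorem IsQuasiIso.bijective_of_bijective (hq : IsQuasiIso d d' hC hI)
    (hh : IsDGHom d d' hC hI) (hI_bij : Function.Bijective hI) : Function.Bijective hC := by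
  obtain ⟨-, hker_surj, hcoker_inj, hcoker_surj⟩ := hq
  refine ⟨(injective_iff_map_eq_zero hC).2 fun c hc => ?_, fun c' => ?_⟩
  · obtain ⟨x, rfl⟩ := hcoker_inj c ⟨0, by rw [hc, map_zero]⟩
    obtain ⟨y, hy, hxy⟩ := hker_surj (hI x) (by rw [hh.2, hc])
    rw [← hI_bij.1 hxy, hy]
  · obtain ⟨c, x', rfl⟩ := hcoker_surj c'
    obtain ⟨x, rfl⟩ := hI_bij.2 x'
    exact ⟨c + d x, by rw [map_add, ← hh.2]⟩

end

theorem corr_adm_isGroupoid_general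
    -- `R₁ = (C₁, I₁, d₁)`, `R₂ = (C₂, I₂, d₂)` :
    (C1 I1 : Type) [CommRing C1] [AddCommGroup I1] [Module C1 I1]
    (d1 : I1 →ₗ[C1] C1)
    (I2 : Type) [AddCommGroup I2]
    -- the two correspondences `R₁₂`, `R₁₂'` :
    (C12 I12 : Type) [CommRing C12] [AddCommGroup I12] [Module C12 I12]
    (d12 : I12 →ₗ[C12] C12)
    (C12' I12' : Type) [CommRing C12'] [AddCommGroup I12'] [Module C12' I12']
    (d12' : I12' →ₗ[C12'] C12')
    -- legs of the first correspondence: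
    (fC : C12 →+* C1) (fI : I12 →+ I1)
    (gI : I12 →+ I2)
    -- legs of the second correspondence:
    (fC' : C12' →+* C1) (fI' : I12' →+ I1) (hf' : IsDGHom d12' d1 fC' fI')
    (gI' : I12' →+ I2)
    -- both correspondences are admissible:
    (hadm : IsQuasiIso d12 d1 fC fI ∧
      Function.Bijective (fun x : I12 => (fI x, gI x)))
    (hadm' : IsQuasiIso d12' d1 fC' fI' ∧
      Function.Bijective (fun x : I12' => (fI' x, gI' x)))
    -- a morphism of correspondences `h : R₁₂ → R₁₂'` :
    (hC : C12 →+* C12') (hI : I12 →+ I12') (hh : IsDGHom d12 d12' hC hI)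
    (hcommf : ∀ c, fC' (hC c) = fC c) (hcommfI : ∀ x, fI' (hI x) = fI x)
    (hcommgI : ∀ x, gI' (hI x) = gI x) :
    Function.Bijective hC ∧ Function.Bijective hI := by
  obtain ⟨hfq, hbij⟩ := hadm
  obtain ⟨hfq', hbij'⟩ := hadm'
  have hI_bij : Function.Bijective hI := by
    rw [← hbij'.of_comp_iff']
    convert hbij using 1
    funext x
    simp only [Function.comp_apply, hcommfI, hcommgI]
  exact ⟨(hfq.of_comp_right hh hf' hfq' hcommf hcommfI).bijective_of_bijective hh hI_bij, hI_bij⟩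

/-- Every morphism in the category `Corr_adm(R₁, R₂)` of
admissible correspondences between `R₁, R₂ ∈ DGRings^{0,-1}` is an
isomorphism, i.e. `Corr_adm(R₁, R₂)` is a groupoid.  Here a correspondence
`R₁ ←f– R₁₂ –g→ R₂` is admissible if `f` is a quasi-isomorphism and
`R₁₂^{-1} → R₁^{-1} × R₂^{-1}` is an isomorphism; a morphism of
correspondences is a map `h : R₁₂ → R₁₂'` commuting with the legs, and being
an isomorphism means both components of `h` are bijective. -/
theorem corr_adm_isGroupoid
    -- `R₁ = (C₁, I₁, d₁)`, `R₂ = (C₂, I₂, d₂)` :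
    (C1 I1 : Type) [CommRing C1] [AddCommGroup I1] [Module C1 I1]
    (d1 : I1 →ₗ[C1] C1) (hq1 : ∀ x y : I1, d1 x • y = d1 y • x)
    (C2 I2 : Type) [CommRing C2] [AddCommGroup I2] [Module C2 I2]
    (d2 : I2 →ₗ[C2] C2) (hq2 : ∀ x y : I2, d2 x • y = d2 y • x)
    -- the two correspondences `R₁₂`, `R₁₂'` :
    (C12 I12 : Type) [CommRing C12] [AddCommGroup I12] [Module C12 I12]
    (d12 : I12 →ₗ[C12] C12) (hq12 : ∀ x y : I12, d12 x • y = d12 y • x)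
    (C12' I12' : Type) [CommRing C12'] [AddCommGroup I12'] [Module C12' I12']
    (d12' : I12' →ₗ[C12'] C12') (hq12' : ∀ x y : I12', d12' x • y = d12' y • x)
    -- legs of the first correspondence:
    (fC : C12 →+* C1) (fI : I12 →+ I1) (hf : IsDGHom d12 d1 fC fI)
    (gC : C12 →+* C2) (gI : I12 →+ I2) (hg : IsDGHom d12 d2 gC gI)
    -- legs of the second correspondence:
    (fC' : C12' →+* C1) (fI' : I12' →+ I1) (hf' : IsDGHom d12' d1 fC' fI')
    (gC' : C12' →+* C2) (gI' : I12' →+ I2) (hg' : IsDGHom d12' d2 gC' gI')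
    -- both correspondences are admissible:
    (hadm : IsQuasiIso d12 d1 fC fI ∧
      Function.Bijective (fun x : I12 => (fI x, gI x)))
    (hadm' : IsQuasiIso d12' d1 fC' fI' ∧
      Function.Bijective (fun x : I12' => (fI' x, gI' x)))
    -- a morphism of correspondences `h : R₁₂ → R₁₂'` :
    (hC : C12 →+* C12') (hI : I12 →+ I12') (hh : IsDGHom d12 d12' hC hI)
    (hcommf : ∀ c, fC' (hC c) = fC c) (hcommfI : ∀ x, fI' (hI x) = fI x)
    (hcommg : ∀ c, gC' (hC c) = gC c) (hcommgI : ∀ x, gI' (hI x) = gI x) :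
    Function.Bijective hC ∧ Function.Bijective hI :=
  corr_adm_isGroupoid_general C1 I1 d1 I2 C12 I12 d12 C12' I12' d12' fC fI gI fC' fI' hf' gI' hadm
    hadm' hC hI hh hcommf hcommfI hcommgI
end

section
/- Given a butterfly diagram (a ring R_12^0 with ring maps f^0 : R_12^0 → R_1^0, g^0 : R_12^0 → R_2^0 and module maps h_1 : R_1^{-1} → R_12^0, h_2 : R_2^{-1} → R_12^0, with the NE-SW sequence 0 → R_2^{-1} →h_2 R_12^0 →f^0 R_1^0 → 0 exact), any morphism of butterflies (a ring map R_12^0 → R'^0_12 commuting with all four structure maps) is an isomorphism. -/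
/-!
A morphism of butterflies maps the NE–SW row `0 → R₂⁻¹ → B⁰ → R₁⁰ → 0` to
`0 → R₂⁻¹ → B'⁰ → R₁⁰ → 0` by the identity on both outer terms, so it is bijective by the
short five lemma.
-/

namespace AddMonoidHom

variable {K B B' Q : Type*} [AddZeroClass K] [AddGroup B] [AddGroup B'] [AddGroup Q]

theorem injective_of_exact_of_injective {h : K →+ B} {f : B →+ Q} {h' : K →+ B'}
    {f' : B' →+ Q} {t : B →+ B'} (hexact : Function.Exact h f) (hinj' : Function.Injective h')
    (ht : ∀ y, t (h y) = h' y) (hf : ∀ b, f' (t b) = f b) : Function.Injective t := by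
  rw [injective_iff_map_eq_zero]
  intro b hb
  obtain ⟨y, rfl⟩ := (hexact b).1 (by rw [← hf, hb, map_zero])
  rw [ht] at hb
  rw [hinj' (hb.trans (map_zero h').symm), map_zero]

theorem surjective_of_exact_of_surjective {h : K →+ B} {f : B →+ Q} {h' : K →+ B'}
    {f' : B' →+ Q} {t : B →+ B'} (hexact' : Function.Exact h' f') (hsurj : Function.Surjective f)
    (ht : ∀ y, t (h y) = h' y) (hf : ∀ b, f' (t b) = f b) : Function.Surjective t := by
  intro b'
  obtain ⟨b, hb⟩ := hsurj (f' b')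
  obtain ⟨y, hy⟩ := (hexact' (b' - t b)).1 (by rw [map_sub, hf, hb, sub_self])
  exact ⟨h y + b, by rw [map_add, ht, hy, sub_add_cancel]⟩

end AddMonoidHom

theorem butterfly_morphism_is_iso_general
    -- `R₁` and `R₂`:
    (R10 : Type) [CommRing R10]
    (M2 : Type) [AddCommGroup M2]
    -- first butterfly `B`:
    (B0 : Type) [CommRing B0]
    (f0 : B0 →+* R10) (h2 : M2 →+ B0)
    (hker : ∀ b : B0, f0 b = 0 ↔ ∃ y : M2, h2 y = b)
    (hsurj : Function.Surjective f0)
    -- second butterfly `B'`: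
    (B0' : Type) [CommRing B0']
    (f0' : B0' →+* R10) (h2' : M2 →+ B0')
    (hinj' : Function.Injective h2')
    (hker' : ∀ b : B0', f0' b = 0 ↔ ∃ y : M2, h2' y = b)
    -- a morphism of butterflies `t : B → B'`:
    (t : B0 →+* B0')
    (ht2 : ∀ y : M2, t (h2 y) = h2' y)
    (htf : ∀ b : B0, f0' (t b) = f0 b) :
    Function.Bijective t :=
  ⟨AddMonoidHom.injective_of_exact_of_injective (f := f0.toAddMonoidHom)
      (f' := f0'.toAddMonoidHom) (t := t.toAddMonoidHom) hker hinj' ht2 htf,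
    AddMonoidHom.surjective_of_exact_of_surjective (f := f0.toAddMonoidHom)
      (f' := f0'.toAddMonoidHom) (t := t.toAddMonoidHom) hker' hsurj ht2 htf⟩

/-- Fix `R₁, R₂ ∈ DGRings^{0,-1}` (so `Rᵢ⁰` is a commutative
ring, `Rᵢ⁻¹` an `Rᵢ⁰`-module with differential `dᵢ` satisfying the quasi-ideal
condition).  A *butterfly* is a commutative ring `B⁰` with ring maps
`f⁰ : B⁰ → R₁⁰`, `g⁰ : B⁰ → R₂⁰` and additive maps `h₁ : R₁⁻¹ → B⁰`,
`h₂ : R₂⁻¹ → B⁰` which are `B⁰`-linear (via `f⁰` resp. `g⁰`), such that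
`f⁰ ∘ h₁ = d₁`, `g⁰ ∘ h₂ = d₂`, the NW–SE sequence `R₁⁻¹ → B⁰ → R₂⁰` is a
complex (`g⁰ ∘ h₁ = 0`), and the NE–SW sequence
`0 → R₂⁻¹ →h₂ B⁰ →f⁰ R₁⁰ → 0` is exact.  Then any morphism of butterflies —
a ring map `t : B⁰ → B'⁰` commuting with all four structure maps — is an
isomorphism (bijective). -/
theorem butterfly_morphism_is_iso
    -- `R₁` and `R₂`:
    (R10 M1 : Type) [CommRing R10] [AddCommGroup M1] [Module R10 M1]
    (d1 : M1 →ₗ[R10] R10) (hq1 : ∀ x y : M1, d1 x • y = d1 y • x)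
    (R20 M2 : Type) [CommRing R20] [AddCommGroup M2] [Module R20 M2]
    (d2 : M2 →ₗ[R20] R20) (hq2 : ∀ x y : M2, d2 x • y = d2 y • x)
    -- first butterfly `B`:
    (B0 : Type) [CommRing B0]
    (f0 : B0 →+* R10) (g0 : B0 →+* R20) (h1 : M1 →+ B0) (h2 : M2 →+ B0)
    (hlin1 : ∀ (b : B0) (x : M1), h1 (f0 b • x) = b * h1 x)
    (hlin2 : ∀ (b : B0) (y : M2), h2 (g0 b • y) = b * h2 y)
    (hcomm1 : ∀ x : M1, f0 (h1 x) = d1 x)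
    (hcomm2 : ∀ y : M2, g0 (h2 y) = d2 y)
    (hcplx : ∀ x : M1, g0 (h1 x) = 0)
    (hinj : Function.Injective h2)
    (hker : ∀ b : B0, f0 b = 0 ↔ ∃ y : M2, h2 y = b)
    (hsurj : Function.Surjective f0)
    -- second butterfly `B'`:
    (B0' : Type) [CommRing B0']
    (f0' : B0' →+* R10) (g0' : B0' →+* R20) (h1' : M1 →+ B0') (h2' : M2 →+ B0')
    (hlin1' : ∀ (b : B0') (x : M1), h1' (f0' b • x) = b * h1' x)
    (hlin2' : ∀ (b : B0') (y : M2), h2' (g0' b • y) = b * h2' y)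
    (hcomm1' : ∀ x : M1, f0' (h1' x) = d1 x)
    (hcomm2' : ∀ y : M2, g0' (h2' y) = d2 y)
    (hcplx' : ∀ x : M1, g0' (h1' x) = 0)
    (hinj' : Function.Injective h2')
    (hker' : ∀ b : B0', f0' b = 0 ↔ ∃ y : M2, h2' y = b)
    (hsurj' : Function.Surjective f0')
    -- a morphism of butterflies `t : B → B'`:
    (t : B0 →+* B0')
    (ht1 : ∀ x : M1, t (h1 x) = h1' x)
    (ht2 : ∀ y : M2, t (h2 y) = h2' y)
    (htf : ∀ b : B0, f0' (t b) = f0 b)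
    (htg : ∀ b : B0, g0' (t b) = g0 b) :
    Function.Bijective t :=
  butterfly_morphism_is_iso_general R10 M2 B0 f0 h2 hker hsurj B0' f0' h2' hinj' hker' t ht2 htf
end

section
/- Let R_1 ←f− R_12 −g→ R_2 be a weakly admissible correspondence in DGRings^{0,-1} (f a quasi-isomorphism and R_12^{-1} → R_1^{-1} × R_2^{-1} surjective). Then f is surjective and Ker f is an acyclic complex. -/
namespace IsQuasiIso

variable {C I : Type} [CommRing C] [AddCommGroup I] [Module C I] {d : I →ₗ[C] C}
  {C' I' : Type} [CommRing C'] [AddCommGroup I'] [Module C' I'] {d' : I' →ₗ[C'] C'}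
  {fC : C →+* C'} {fI : I →+ I'}

theorem surjective_ringHom (hq : IsQuasiIso d d' fC fI) (hf : IsDGHom d d' fC fI)
    (hfI : Function.Surjective fI) : Function.Surjective fC := by
  intro c'
  obtain ⟨c, x', rfl⟩ := hq.2.2.2 c'
  obtain ⟨x, rfl⟩ := hfI x'
  exact ⟨c + d x, by rw [map_add, ← hf.2]⟩

/-- A cycle `c` of degree `0` killed by `fC` is a boundary by injectivity on `H^0`; its preimage
`x` is then corrected by a cycle lifting the cycle `fI x`, using surjectivity on `H^{-1}`. -/
theorem exists_map_eq_zero_d_eq (hq : IsQuasiIso d d' fC fI) (hf : IsDGHom d d' fC fI) {c : C}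
    (hc : fC c = 0) : ∃ x : I, fI x = 0 ∧ d x = c := by
  obtain ⟨x, hx⟩ := hq.2.2.1 c ⟨0, by rw [hc, map_zero]⟩
  have hdfx : d' (fI x) = 0 := by rw [hf.2, hx, hc]
  obtain ⟨y, hdy, hfy⟩ := hq.2.1 (fI x) hdfx
  exact ⟨x - y, by rw [map_sub, hfy, sub_self], by rw [map_sub, hdy, sub_zero, hx]⟩

end IsQuasiIso

theorem weakly_admissible_surjective_acyclic_kernel_general
    (C1 I1 : Type) [CommRing C1] [AddCommGroup I1] [Module C1 I1]
    (d1 : I1 →ₗ[C1] C1)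
    (I2 : Type) [AddCommGroup I2]
    (C12 I12 : Type) [CommRing C12] [AddCommGroup I12] [Module C12 I12]
    (d12 : I12 →ₗ[C12] C12)
    (fC : C12 →+* C1) (fI : I12 →+ I1) (hf : IsDGHom d12 d1 fC fI)
    (gI : I12 →+ I2)
    -- weak admissibility:
    (hqiso : IsQuasiIso d12 d1 fC fI)
    (hsurj : Function.Surjective (fun x : I12 => (fI x, gI x))) :
    -- `f` is surjective:
    Function.Surjective fC ∧ Function.Surjective fI ∧
    -- `H^{-1}(Ker f) = 0`:
    (∀ x : I12, fI x = 0 → d12 x = 0 → x = 0) ∧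
    -- `H^{0}(Ker f) = 0`:
    (∀ c : C12, fC c = 0 → ∃ x : I12, fI x = 0 ∧ d12 x = c) := by
  have hfI : Function.Surjective fI := Prod.fst_surjective.comp hsurj
  exact ⟨hqiso.surjective_ringHom hf hfI, hfI,
    fun x hfx hdx => hqiso.1 x hdx hfx,
    fun _ hc => hqiso.exists_map_eq_zero_d_eq hf hc⟩

/-- Let `R₁ ←f– R₁₂ –g→ R₂` be a weakly admissible
correspondence in `DGRings^{0,-1}`: `f` is a quasi-isomorphism and
`R₁₂^{-1} → R₁^{-1} × R₂^{-1}` is surjective.  Then `f` is surjective (in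
both degrees) and `Ker f` (the DG ideal `{x : f x = 0}`) is acyclic:
its cohomology vanishes in degrees `-1` and `0`. -/
theorem weakly_admissible_surjective_acyclic_kernel
    (C1 I1 : Type) [CommRing C1] [AddCommGroup I1] [Module C1 I1]
    (d1 : I1 →ₗ[C1] C1) (hq1 : ∀ x y : I1, d1 x • y = d1 y • x)
    (C2 I2 : Type) [CommRing C2] [AddCommGroup I2] [Module C2 I2]
    (d2 : I2 →ₗ[C2] C2) (hq2 : ∀ x y : I2, d2 x • y = d2 y • x)
    (C12 I12 : Type) [CommRing C12] [AddCommGroup I12] [Module C12 I12]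
    (d12 : I12 →ₗ[C12] C12) (hq12 : ∀ x y : I12, d12 x • y = d12 y • x)
    (fC : C12 →+* C1) (fI : I12 →+ I1) (hf : IsDGHom d12 d1 fC fI)
    (gC : C12 →+* C2) (gI : I12 →+ I2) (hg : IsDGHom d12 d2 gC gI)
    -- weak admissibility:
    (hqiso : IsQuasiIso d12 d1 fC fI)
    (hsurj : Function.Surjective (fun x : I12 => (fI x, gI x))) :
    -- `f` is surjective:
    Function.Surjective fC ∧ Function.Surjective fI ∧
    -- `H^{-1}(Ker f) = 0`:
    (∀ x : I12, fI x = 0 → d12 x = 0 → x = 0) ∧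
    -- `H^{0}(Ker f) = 0`:
    (∀ c : C12, fC c = 0 → ∃ x : I12, fI x = 0 ∧ d12 x = c) :=
  weakly_admissible_surjective_acyclic_kernel_general C1 I1 d1 I2 C12 I12 d12 fC fI hf gI hqiso
    hsurj
end

section
/- Let φ : R_1 → R_2 be a morphism in DGRings^{0,-1}. Define R_12^0 := R_1^0 × R_2^{-1} as an additive group with multiplication (x,y)(x',y') := (xx', φ^0(x)y' + φ^0(x')y + (dy)·y'). Then R_12^0 is a commutative ring, f^0(x,y) := x and g^0(x,y) := φ^0(x) + dy are ring homomorphisms, σ(x) := (x,0) is a ring homomorphism splitting f^0, and the sequence 0 → R_2^{-1} →h_2 R_12^0 →f^0 R_1^0 → 0 with h_2(y) := (0,y) is exact. -/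
/-! `R₁₂⁰` is `R₁⁰ ⊕ R₂⁻¹`, where `R₂⁻¹` is a non-unital ring under `y * y' := d y • y'` on which
`R₁⁰` acts through `φ⁰`. That product is commutative because `d y • y' = d y' • y`; associativity
and distributivity are bilinear identities, and `g⁰` is multiplicative because `d` is
`R₂⁰`-linear, so `d (d y • y') = d y * d y'`. -/

/-- The multiplication on `R₁₂⁰ := R₁⁰ × R₂⁻¹` associated to a morphism
`φ : R₁ → R₂` in `DGRings^{0,-1}`:
`(x, y) · (x', y') := (x x', φ⁰(x) y' + φ⁰(x') y + (d y) · y')`. -/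
def bmul {C1 : Type} [CommRing C1] {C2 I2 : Type} [CommRing C2]
    [AddCommGroup I2] [Module C2 I2] (d2 : I2 →ₗ[C2] C2) (φ0 : C1 →+* C2)
    (p q : C1 × I2) : C1 × I2 :=
  (p.1 * q.1, φ0 p.1 • q.2 + φ0 q.1 • p.2 + d2 p.2 • q.2)

section bmul

variable {C1 C2 I2 : Type} [CommRing C1] [CommRing C2] [AddCommGroup I2] [Module C2 I2]
  (d2 : I2 →ₗ[C2] C2) (φ0 : C1 →+* C2)

@[simp]
theorem fst_bmul (p q : C1 × I2) : (bmul d2 φ0 p q).1 = p.1 * q.1 := rfl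

@[simp]
theorem snd_bmul (p q : C1 × I2) :
    (bmul d2 φ0 p q).2 = φ0 p.1 • q.2 + φ0 q.1 • p.2 + d2 p.2 • q.2 := rfl

theorem bmul_comm (hq2 : ∀ x y : I2, d2 x • y = d2 y • x) (p q : C1 × I2) :
    bmul d2 φ0 p q = bmul d2 φ0 q p := by
  refine Prod.ext (mul_comm _ _) ?_
  simp only [snd_bmul, hq2 p.2 q.2]
  abel

theorem bmul_assoc (p q r : C1 × I2) :
    bmul d2 φ0 (bmul d2 φ0 p q) r = bmul d2 φ0 p (bmul d2 φ0 q r) := by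
  refine Prod.ext (mul_assoc _ _ _) ?_
  simp only [fst_bmul, snd_bmul, map_add, map_smul, map_mul, smul_add, smul_smul, smul_eq_mul]
  module

theorem bmul_add (p q r : C1 × I2) :
    bmul d2 φ0 p (q + r) = bmul d2 φ0 p q + bmul d2 φ0 p r := by
  refine Prod.ext (mul_add _ _ _) ?_
  simp only [snd_bmul, Prod.fst_add, Prod.snd_add, map_add, add_smul, smul_add]
  abel

theorem one_bmul (p : C1 × I2) : bmul d2 φ0 (1, 0) p = p := by
  ext <;> simp

theorem bmul_mk_zero (x x' : C1) : bmul d2 φ0 (x, 0) (x', 0) = (x * x', (0 : I2)) := by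
  ext <;> simp

theorem apply_fst_add_apply_snd_bmul (p q : C1 × I2) :
    φ0 (bmul d2 φ0 p q).1 + d2 (bmul d2 φ0 p q).2
      = (φ0 p.1 + d2 p.2) * (φ0 q.1 + d2 q.2) := by
  simp only [fst_bmul, snd_bmul, map_mul, map_add, map_smul, smul_eq_mul]
  ring

end bmul

theorem butterfly_of_morphism_general
    (C1 : Type) [CommRing C1]
    (C2 I2 : Type) [CommRing C2] [AddCommGroup I2] [Module C2 I2]
    (d2 : I2 →ₗ[C2] C2) (hq2 : ∀ x y : I2, d2 x • y = d2 y • x)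
    (φ0 : C1 →+* C2) :
    -- `R₁₂⁰` is a commutative ring:
    (∀ p q : C1 × I2, bmul d2 φ0 p q = bmul d2 φ0 q p) ∧
    (∀ p q r : C1 × I2,
      bmul d2 φ0 (bmul d2 φ0 p q) r = bmul d2 φ0 p (bmul d2 φ0 q r)) ∧
    (∀ p q r : C1 × I2,
      bmul d2 φ0 p (q + r) = bmul d2 φ0 p q + bmul d2 φ0 p r) ∧
    (∀ p : C1 × I2, bmul d2 φ0 (1, 0) p = p) ∧
    -- `f⁰` is a (multiplicative) ring homomorphism:
    (∀ p q : C1 × I2, (bmul d2 φ0 p q).1 = p.1 * q.1) ∧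
    -- `g⁰` is a (multiplicative) ring homomorphism:
    (∀ p q : C1 × I2,
      φ0 (bmul d2 φ0 p q).1 + d2 (bmul d2 φ0 p q).2
        = (φ0 p.1 + d2 p.2) * (φ0 q.1 + d2 q.2)) ∧
    -- `σ` is a ring homomorphism splitting `f⁰`:
    (∀ x x' : C1, bmul d2 φ0 (x, 0) (x', 0) = (x * x', 0)) ∧
    (∀ x : C1, ((x, (0 : I2)) : C1 × I2).1 = x) ∧
    -- exactness of `0 → R₂⁻¹ →h₂ R₁₂⁰ →f⁰ R₁⁰ → 0`:
    Function.Injective (fun y : I2 => (((0 : C1), y) : C1 × I2)) ∧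
    (∀ p : C1 × I2, p.1 = 0 ↔ ∃ y : I2, ((0 : C1), y) = p) ∧
    Function.Surjective (fun p : C1 × I2 => p.1) :=
  ⟨bmul_comm d2 φ0 hq2, bmul_assoc d2 φ0, bmul_add d2 φ0, one_bmul d2 φ0, fst_bmul d2 φ0,
    apply_fst_add_apply_snd_bmul d2 φ0, bmul_mk_zero d2 φ0, fun _ => rfl,
    Prod.mk_right_injective 0,
    fun p => ⟨fun h => ⟨p.2, Prod.ext h.symm rfl⟩, by rintro ⟨y, rfl⟩; rfl⟩,
    fun x => ⟨(x, 0), rfl⟩⟩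

/-- Let `φ : R₁ → R₂` be a morphism in `DGRings^{0,-1}`.
With `R₁₂⁰ := R₁⁰ × R₂⁻¹` equipped with componentwise addition and the
multiplication `bmul` above, `R₁₂⁰` is a commutative ring with unit `(1, 0)`;
`f⁰ (x, y) := x` and `g⁰ (x, y) := φ⁰ x + d y` are ring homomorphisms;
`σ x := (x, 0)` is a ring homomorphism splitting `f⁰`; and the sequence
`0 → R₂⁻¹ →h₂ R₁₂⁰ →f⁰ R₁⁰ → 0` with `h₂ y := (0, y)` is exact. -/
theorem butterfly_of_morphism
    (C1 I1 : Type) [CommRing C1] [AddCommGroup I1] [Module C1 I1]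
    (d1 : I1 →ₗ[C1] C1) (hq1 : ∀ x y : I1, d1 x • y = d1 y • x)
    (C2 I2 : Type) [CommRing C2] [AddCommGroup I2] [Module C2 I2]
    (d2 : I2 →ₗ[C2] C2) (hq2 : ∀ x y : I2, d2 x • y = d2 y • x)
    (φ0 : C1 →+* C2) (φm : I1 →+ I2)
    (hsm : ∀ (c : C1) (x : I1), φm (c • x) = φ0 c • φm x)
    (hdc : ∀ x : I1, d2 (φm x) = φ0 (d1 x)) :
    -- `R₁₂⁰` is a commutative ring:
    (∀ p q : C1 × I2, bmul d2 φ0 p q = bmul d2 φ0 q p) ∧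
    (∀ p q r : C1 × I2,
      bmul d2 φ0 (bmul d2 φ0 p q) r = bmul d2 φ0 p (bmul d2 φ0 q r)) ∧
    (∀ p q r : C1 × I2,
      bmul d2 φ0 p (q + r) = bmul d2 φ0 p q + bmul d2 φ0 p r) ∧
    (∀ p : C1 × I2, bmul d2 φ0 (1, 0) p = p) ∧
    -- `f⁰` is a (multiplicative) ring homomorphism:
    (∀ p q : C1 × I2, (bmul d2 φ0 p q).1 = p.1 * q.1) ∧
    -- `g⁰` is a (multiplicative) ring homomorphism:
    (∀ p q : C1 × I2,
      φ0 (bmul d2 φ0 p q).1 + d2 (bmul d2 φ0 p q).2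
        = (φ0 p.1 + d2 p.2) * (φ0 q.1 + d2 q.2)) ∧
    -- `σ` is a ring homomorphism splitting `f⁰`:
    (∀ x x' : C1, bmul d2 φ0 (x, 0) (x', 0) = (x * x', 0)) ∧
    (∀ x : C1, ((x, (0 : I2)) : C1 × I2).1 = x) ∧
    -- exactness of `0 → R₂⁻¹ →h₂ R₁₂⁰ →f⁰ R₁⁰ → 0`:
    Function.Injective (fun y : I2 => (((0 : C1), y) : C1 × I2)) ∧
    (∀ p : C1 × I2, p.1 = 0 ↔ ∃ y : I2, ((0 : C1), y) = p) ∧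
    Function.Surjective (fun p : C1 × I2 => p.1) :=
  butterfly_of_morphism_general C1 C2 I2 d2 hq2 φ0
end

section
/- Let R_1 ←f− R_12 −g→ R_2 be an admissible correspondence in DGRings^{0,-1}. Then the restriction map from splittings s : R_1 → R_12 of f in DGRings^{0,-1} (DG ring maps with f∘s = id) to ring-homomorphism splittings σ : R_1^0 → R_12^0 of f^0 (with f^0∘σ = id), given by s ↦ s^0, is a bijection. -/
/-!
A surjective quasi-isomorphism `f` identifies `R₁₂⁻¹` with the pairs `(x, c) ∈ R₁⁻¹ × R₁₂⁰` such
that `f c = d x`: injectivity of `H⁻¹(f)` makes `y ↦ (f y, d y)` injective, and surjectivity of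
`f⁻¹`, injectivity of `H⁰(f)` and surjectivity of `H⁻¹(f)` make it surjective onto those pairs. Hence a ring
splitting `σ` of `f⁰` has exactly one extension to degree `-1`, namely `x ↦` the unique `y`
with `f y = x` and `d y = σ (d x)`, and uniqueness also gives its additivity and `σ`-linearity.
-/

namespace IsQuasiIso

variable {C I : Type} [CommRing C] [AddCommGroup I] [Module C I] {d : I →ₗ[C] C}
  {C' I' : Type} [CommRing C'] [AddCommGroup I'] [Module C' I'] {d' : I' →ₗ[C'] C'}
  {fC : C →+* C'} {fI : I →+ I'}

theorem eq_of_map_eq_of_d_eq (hq : IsQuasiIso d d' fC fI) {y y' : I} (hf : fI y = fI y')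
    (hd : d y = d y') : y = y' :=
  sub_eq_zero.mp <| hq.1 (y - y') (by rw [map_sub, hd, sub_self])
    (by rw [map_sub, hf, sub_self])

theorem exists_lift (hf : IsDGHom d d' fC fI) (hq : IsQuasiIso d d' fC fI)
    (hsurj : Function.Surjective fI) {x : I'} {c : C} (hc : fC c = d' x) :
    ∃ y : I, fI y = x ∧ d y = c := by
  obtain ⟨y₀, rfl⟩ := hsurj x
  have hdefect : fC (d y₀ - c) = 0 := by rw [map_sub, ← hf.2, hc, sub_self]
  obtain ⟨z, hz⟩ := hq.2.2.1 (d y₀ - c) ⟨0, by rw [hdefect, map_zero]⟩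
  have hcycle : d' (fI z) = 0 := by rw [hf.2, hz, hdefect]
  obtain ⟨u, hu, hfu⟩ := hq.2.1 (fI z) hcycle
  -- `z - u` corrects the differential of `y₀` without changing its image under `f`.
  refine ⟨y₀ - (z - u), ?_, ?_⟩
  · rw [map_sub, map_sub, hfu, sub_self, sub_zero]
  · rw [map_sub, map_sub, hz, hu, sub_zero, sub_sub_cancel]

variable (hf : IsDGHom d d' fC fI) (hq : IsQuasiIso d d' fC fI)
  (hsurj : Function.Surjective fI) (σ : C' →+* C) (hσ : ∀ c : C', fC (σ c) = c)
include hf hq hsurj hσ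

noncomputable def extendSplittingFun (x : I') : I :=
  (exists_lift hf hq hsurj (hσ (d' x))).choose

theorem map_extendSplittingFun (x : I') : fI (extendSplittingFun hf hq hsurj σ hσ x) = x :=
  (exists_lift hf hq hsurj (hσ (d' x))).choose_spec.1

theorem d_extendSplittingFun (x : I') : d (extendSplittingFun hf hq hsurj σ hσ x) = σ (d' x) :=
  (exists_lift hf hq hsurj (hσ (d' x))).choose_spec.2

theorem eq_extendSplittingFun {x : I'} {y : I} (hy : fI y = x) (hdy : d y = σ (d' x)) :
    y = extendSplittingFun hf hq hsurj σ hσ x :=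
  hq.eq_of_map_eq_of_d_eq (by rw [hy, map_extendSplittingFun])
    (by rw [hdy, d_extendSplittingFun])

noncomputable def extendSplitting : I' →+ I where
  toFun := extendSplittingFun hf hq hsurj σ hσ
  map_zero' := (eq_extendSplittingFun hf hq hsurj σ hσ (map_zero fI)
    (by rw [map_zero, map_zero, map_zero])).symm
  map_add' a b := (eq_extendSplittingFun hf hq hsurj σ hσ
    (by rw [map_add, map_extendSplittingFun, map_extendSplittingFun])
    (by rw [map_add, d_extendSplittingFun, d_extendSplittingFun, map_add, map_add])).symm

theorem coe_extendSplitting :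
    ⇑(extendSplitting hf hq hsurj σ hσ) = extendSplittingFun hf hq hsurj σ hσ :=
  rfl

theorem isDGHom_extendSplitting : IsDGHom d' d σ (extendSplitting hf hq hsurj σ hσ) := by
  refine ⟨fun c x => ?_, d_extendSplittingFun hf hq hsurj σ hσ⟩
  rw [coe_extendSplitting]
  refine (eq_extendSplittingFun hf hq hsurj σ hσ ?_ ?_).symm
  · rw [hf.1, hσ, map_extendSplittingFun]
  · rw [map_smul, d_extendSplittingFun, map_smul, smul_eq_mul, smul_eq_mul, map_mul]

theorem eq_extendSplitting {t : I' →+ I} (ht : IsDGHom d' d σ t) (hft : ∀ x, fI (t x) = x) :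
    t = extendSplitting hf hq hsurj σ hσ :=
  AddMonoidHom.ext fun x => eq_extendSplittingFun hf hq hsurj σ hσ (hft x) (ht.2 x)

end IsQuasiIso

theorem splittings_bijection_general
    (C1 I1 : Type) [CommRing C1] [AddCommGroup I1] [Module C1 I1]
    (d1 : I1 →ₗ[C1] C1)
    (C12 I12 : Type) [CommRing C12] [AddCommGroup I12] [Module C12 I12]
    (d12 : I12 →ₗ[C12] C12)
    (fC : C12 →+* C1) (fI : I12 →+ I1) (hf : IsDGHom d12 d1 fC fI)
    (hfsurjI : Function.Surjective fI)
    (hqiso : IsQuasiIso d12 d1 fC fI) :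
    ∀ σ : C1 →+* C12, (∀ c : C1, fC (σ c) = c) →
      ∃! s : (C1 →+* C12) × (I1 →+ I12),
        (IsDGHom d1 d12 s.1 s.2 ∧
          (∀ c : C1, fC (s.1 c) = c) ∧ (∀ x : I1, fI (s.2 x) = x)) ∧
        s.1 = σ := by
  intro σ hσ
  refine ⟨(σ, hqiso.extendSplitting hf hfsurjI σ hσ),
    ⟨⟨hqiso.isDGHom_extendSplitting hf hfsurjI σ hσ, hσ,
      hqiso.map_extendSplittingFun hf hfsurjI σ hσ⟩, rfl⟩, ?_⟩
  rintro ⟨τ, t⟩ ⟨⟨ht, -, hft⟩, rfl : τ = σ⟩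
  exact Prod.ext rfl (hqiso.eq_extendSplitting hf hfsurjI τ hσ ht hft)

/-- Let `R₁ ←f– R₁₂ –g→ R₂` be an admissible correspondence
in `DGRings^{0,-1}` (`f` a surjective quasi-isomorphism, and
`R₁₂⁻¹ → R₁⁻¹ × R₂⁻¹` an isomorphism).  Then restriction `s ↦ s⁰` is a
bijection from the set of splittings `s : R₁ → R₁₂` of `f` in
`DGRings^{0,-1}` to the set of ring-homomorphism splittings
`σ : R₁⁰ → R₁₂⁰` of `f⁰`: for every such `σ` there is a unique DG splitting
`s` with `s⁰ = σ`. -/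
theorem splittings_bijection
    (C1 I1 : Type) [CommRing C1] [AddCommGroup I1] [Module C1 I1]
    (d1 : I1 →ₗ[C1] C1) (hq1 : ∀ x y : I1, d1 x • y = d1 y • x)
    (C2 I2 : Type) [CommRing C2] [AddCommGroup I2] [Module C2 I2]
    (d2 : I2 →ₗ[C2] C2) (hq2 : ∀ x y : I2, d2 x • y = d2 y • x)
    (C12 I12 : Type) [CommRing C12] [AddCommGroup I12] [Module C12 I12]
    (d12 : I12 →ₗ[C12] C12) (hq12 : ∀ x y : I12, d12 x • y = d12 y • x)
    (fC : C12 →+* C1) (fI : I12 →+ I1) (hf : IsDGHom d12 d1 fC fI)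
    (gC : C12 →+* C2) (gI : I12 →+ I2) (hg : IsDGHom d12 d2 gC gI)
    -- admissibility (with `f` a surjective quasi-isomorphism):
    (hfsurjC : Function.Surjective fC) (hfsurjI : Function.Surjective fI)
    (hqiso : IsQuasiIso d12 d1 fC fI)
    (hbij : Function.Bijective (fun x : I12 => (fI x, gI x))) :
    ∀ σ : C1 →+* C12, (∀ c : C1, fC (σ c) = c) →
      ∃! s : (C1 →+* C12) × (I1 →+ I12),
        (IsDGHom d1 d12 s.1 s.2 ∧
          (∀ c : C1, fC (s.1 c) = c) ∧ (∀ x : I1, fI (s.2 x) = x)) ∧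
        s.1 = σ :=
  splittings_bijection_general C1 I1 d1 C12 I12 d12 fC fI hf hfsurjI hqiso
end
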